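/- Let (X,d,m) be a metric measure space, p ∈ (1,∞), and let f ∈ L^p(m). If M := sup_{δ∈(0,1)} I_δ(f) < ∞, then for every ε ∈ (0,1): J_ε(f) + ε·T(f) ≤ (p+ε)·M; in particular sup_{ε∈(0,1)} J_ε(f) < ∞ and T(f) < ∞. Here I_δ(f) = ∬_{{(x,y) : |f(x)−f(y)|>δ}} δ^p / (m(B_{d(x,y)}(x))·d(x,y)^p) dm(y) dm(x), J_ε(f) = ∬_{{(x,y) : |f(x)−f(y)|≤1}} ε·|f(x)−f(y)|^{p+ε} / (m(B_{d(x,y)}(x))·d(x,y)^p) dm(y) dm(x), and T(f) = ∬_{{(x,y) : |f(x)−f(y)|>1}} 1/(m(B_{d(x,y)}(x))·d(x,y)^p) dm(y) dm(x). -/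

import Mathlib

open MeasureTheory Metric Filter Set
open scoped ENNReal Topology NNReal

/-- The functional `I_δ(f) = ∬_{|f(x)-f(y)|>δ} δ^p / (μ(B_{d(x,y)}(x)) d(x,y)^p) dμ(y) dμ(x)`,
with values in `[0,∞]`. -/
noncomputable def Ifun {X : Type*} [MetricSpace X] [MeasurableSpace X]
    (μ : Measure X) (p δ : ℝ) (f : X → ℝ) : ℝ≥0∞ :=
  ∫⁻ x, ∫⁻ y, Set.indicator {y | |f x - f y| > δ}
    (fun y => ENNReal.ofReal (δ ^ p) /
      (μ (ball x (dist x y)) * ENNReal.ofReal (dist x y ^ p))) y ∂μ ∂μ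

/-- The functional
`J_δ(f) = ∬_{|f(x)-f(y)| ≤ 1} δ |f(x)-f(y)|^{p+δ} / (μ(B_{d(x,y)}(x)) d(x,y)^p) dμ(y) dμ(x)`,
with values in `[0,∞]`. -/
noncomputable def Jfun {X : Type*} [MetricSpace X] [MeasurableSpace X]
    (μ : Measure X) (p δ : ℝ) (f : X → ℝ) : ℝ≥0∞ :=
  ∫⁻ x, ∫⁻ y, Set.indicator {y | |f x - f y| ≤ 1}
    (fun y => ENNReal.ofReal (δ * |f x - f y| ^ (p + δ)) /
      (μ (ball x (dist x y)) * ENNReal.ofReal (dist x y ^ p))) y ∂μ ∂μ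

/-- The functional `T(f) = ∬_{|f(x)-f(y)| > 1} 1 / (μ(B_{d(x,y)}(x)) d(x,y)^p) dμ(y) dμ(x)`,
with values in `[0,∞]`. -/
noncomputable def Tfun {X : Type*} [MetricSpace X] [MeasurableSpace X]
    (μ : Measure X) (p : ℝ) (f : X → ℝ) : ℝ≥0∞ :=
  ∫⁻ x, ∫⁻ y, Set.indicator {y | |f x - f y| > 1}
    (fun y => 1 / (μ (ball x (dist x y)) * ENNReal.ofReal (dist x y ^ p))) y ∂μ ∂μ

/-!
Let `g(x, y) = |f x - f y|` and let `ν` be `μ ⊗ μ` with density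
`1 / (μ(B_{d(x,y)}(x)) d(x,y)^p)`. Then `I_δ(f) = δ^p ν{g > δ}` and
`J_ε(f) + ε T(f) = ε ∫ min(g, 1)^{p+ε} dν`. The layer-cake formula rewrites the latter as
`ε (p+ε) ∫_0^1 δ^{ε-1} I_δ(f) dδ ≤ ε (p+ε) M ∫_0^1 δ^{ε-1} dδ = (p+ε) M`.
Finiteness of balls makes `μ` σ-finite, which the Fubini–Tonelli arguments need, and `f ∈ L^p`
may be replaced by a measurable representative.
-/

theorem lintegral_Ioo_zero_one_ofReal_rpow_sub_one {s : ℝ} (hs : 0 < s) :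
    ∫⁻ t in Ioo (0 : ℝ) 1, ENNReal.ofReal (t ^ (s - 1)) = ENNReal.ofReal s⁻¹ := by
  have hint : IntegrableOn (fun t : ℝ => t ^ (s - 1)) (Ioo 0 1) :=
    (intervalIntegral.intervalIntegrable_rpow' (by linarith)).1.mono_set Ioo_subset_Ioc_self
  rw [← ofReal_integral_eq_lintegral_ofReal hint
    ((ae_restrict_mem measurableSet_Ioo).mono fun t ht => Real.rpow_nonneg ht.1.le _),
    ← integral_Ioc_eq_integral_Ioo, ← intervalIntegral.integral_of_le zero_le_one,
    integral_rpow (Or.inl (by linarith))]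
  simp [Real.zero_rpow hs.ne']

theorem lintegral_ofReal_min_one_rpow {α : Type*} [MeasurableSpace α] (ν : Measure α)
    {g : α → ℝ} (hg0 : 0 ≤ᵐ[ν] g) (hg : AEMeasurable g ν) {r : ℝ} (hr : 0 < r) :
    ∫⁻ a, ENNReal.ofReal (min (g a) 1 ^ r) ∂ν =
      ENNReal.ofReal r * ∫⁻ t in Ioo 0 1, ν {a | t < g a} * ENNReal.ofReal (t ^ (r - 1)) := by
  rw [lintegral_rpow_eq_lintegral_meas_lt_mul ν
    (hg0.mono fun a ha => le_min ha zero_le_one) (hg.min aemeasurable_const) hr,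
    ← Iio_inter_Ioi, ← Measure.restrict_restrict measurableSet_Iio,
    ← lintegral_indicator measurableSet_Iio]
  congr 1
  refine setLIntegral_congr_fun measurableSet_Ioi fun t _ => ?_
  by_cases ht : t < 1 <;> simp [ht]

section BallKernel

variable {X : Type*} [MetricSpace X] [MeasurableSpace X]

noncomputable def ballKernel (μ : Measure X) (p : ℝ) (x y : X) : ℝ≥0∞ :=
  (μ (ball x (dist x y)) * ENNReal.ofReal (dist x y ^ p))⁻¹

noncomputable def ballKernelMeasure (μ : Measure X) (p : ℝ) : Measure (X × X) :=
  (μ.prod μ).withDensity fun q => ballKernel μ p q.1 q.2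

variable [BorelSpace X] [SecondCountableTopology X] (μ : Measure X) [SFinite μ] (p : ℝ)

theorem measurable_ballKernel : Measurable fun q : X × X => ballKernel μ p q.1 q.2 := by
  have hball : Measurable fun q : X × X => μ (ball q.1 (dist q.1 q.2)) :=
    measurable_measure_prodMk_left (measurableSet_lt (measurable_snd.dist measurable_fst.fst)
      (measurable_fst.fst.dist measurable_fst.snd))
  exact (hball.mul (measurable_dist.pow_const p).ennreal_ofReal).inv

theorem lintegral_lintegral_indicator_div_eq_setLIntegral {S : Set (X × X)}
    (hS : MeasurableSet S) {c : X × X → ℝ≥0∞} (hc : Measurable c) :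
    ∫⁻ x, ∫⁻ y, {y | (x, y) ∈ S}.indicator
        (fun y => c (x, y) / (μ (ball x (dist x y)) * ENNReal.ofReal (dist x y ^ p))) y ∂μ ∂μ =
      ∫⁻ q in S, c q ∂ballKernelMeasure μ p := by
  rw [← lintegral_indicator hS, ballKernelMeasure,
    lintegral_withDensity_eq_lintegral_mul _ (measurable_ballKernel μ p) (hc.indicator hS),
    lintegral_prod _ ((measurable_ballKernel μ p).mul (hc.indicator hS)).aemeasurable]
  refine lintegral_congr fun x => lintegral_congr fun y => ?_
  by_cases h : (x, y) ∈ S <;> simp [h, ballKernel, div_eq_mul_inv, mul_comm]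

end BallKernel

theorem measurable_abs_sub_comp {α : Type*} [MeasurableSpace α] {f : α → ℝ}
    (hf : Measurable f) :
    Measurable fun q : α × α => |f q.1 - f q.2| :=
  ((hf.comp measurable_fst).sub (hf.comp measurable_snd)).abs

section Functionals

variable {X : Type*} [MetricSpace X] [MeasurableSpace X] [BorelSpace X]
  [SecondCountableTopology X] (μ : Measure X) [SFinite μ] (p : ℝ) {f : X → ℝ}

theorem Ifun_eq_mul_ballKernelMeasure (hf : Measurable f) (δ : ℝ) :
    Ifun μ p δ f =
      ENNReal.ofReal (δ ^ p) * ballKernelMeasure μ p {q | δ < |f q.1 - f q.2|} :=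
  (lintegral_lintegral_indicator_div_eq_setLIntegral μ p
    (measurableSet_lt measurable_const (measurable_abs_sub_comp hf)) measurable_const).trans
    (setLIntegral_const _ _)

theorem Tfun_eq_ballKernelMeasure (hf : Measurable f) :
    Tfun μ p f = ballKernelMeasure μ p {q | 1 < |f q.1 - f q.2|} :=
  (lintegral_lintegral_indicator_div_eq_setLIntegral μ p
    (measurableSet_lt measurable_const (measurable_abs_sub_comp hf)) measurable_const).trans
    (setLIntegral_one _)

theorem Jfun_eq_setLIntegral (hf : Measurable f) (ε : ℝ) :
    Jfun μ p ε f = ∫⁻ q in {q | |f q.1 - f q.2| ≤ 1},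
      ENNReal.ofReal (ε * |f q.1 - f q.2| ^ (p + ε)) ∂ballKernelMeasure μ p :=
  lintegral_lintegral_indicator_div_eq_setLIntegral μ p
    (measurableSet_le (measurable_abs_sub_comp hf) measurable_const)
    (measurable_const.mul ((measurable_abs_sub_comp hf).pow_const _)).ennreal_ofReal

theorem Jfun_add_Tfun_eq_lintegral (hf : Measurable f) {ε : ℝ} (hε : 0 ≤ ε) :
    Jfun μ p ε f + ENNReal.ofReal ε * Tfun μ p f = ENNReal.ofReal ε *
      ∫⁻ q, ENNReal.ofReal (min |f q.1 - f q.2| 1 ^ (p + ε)) ∂ballKernelMeasure μ p := by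
  set S := {q : X × X | |f q.1 - f q.2| ≤ 1}
  have hS : MeasurableSet S := measurableSet_le (measurable_abs_sub_comp hf) measurable_const
  have hJ : Jfun μ p ε f = ENNReal.ofReal ε *
      ∫⁻ q in S, ENNReal.ofReal (min |f q.1 - f q.2| 1 ^ (p + ε)) ∂ballKernelMeasure μ p := by
    rw [Jfun_eq_setLIntegral μ p hf, ← lintegral_const_mul' _ _ ENNReal.ofReal_ne_top]
    refine setLIntegral_congr_fun hS fun q hq => ?_
    rw [min_eq_left hq, ENNReal.ofReal_mul hε]
  have hT : Tfun μ p f =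
      ∫⁻ q in Sᶜ, ENNReal.ofReal (min |f q.1 - f q.2| 1 ^ (p + ε)) ∂ballKernelMeasure μ p := by
    have hSc : Sᶜ = {q | 1 < |f q.1 - f q.2|} := by ext q; simp [S]
    rw [Tfun_eq_ballKernelMeasure μ p hf, ← hSc, ← setLIntegral_one]
    refine setLIntegral_congr_fun hS.compl fun q hq => ?_
    rw [min_eq_right (not_le.mp (show ¬ |f q.1 - f q.2| ≤ 1 from hq)).le, Real.one_rpow,
      ENNReal.ofReal_one]
  rw [← lintegral_add_compl _ hS, hJ, hT, mul_add]

end Functionals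

theorem Jfun_add_Tfun_le_of_measurable {X : Type*} [MetricSpace X] [MeasurableSpace X]
    [BorelSpace X] [SecondCountableTopology X] (μ : Measure X) [SFinite μ] {p : ℝ}
    {f : X → ℝ} (hf : Measurable f) {ε : ℝ} (hε : 0 < ε) (hpε : 0 < p + ε) :
    Jfun μ p ε f + ENNReal.ofReal ε * Tfun μ p f ≤
      ENNReal.ofReal (p + ε) * ⨆ δ ∈ Ioo (0 : ℝ) 1, Ifun μ p δ f := by
  set M := ⨆ δ ∈ Ioo (0 : ℝ) 1, Ifun μ p δ f
  have hlayer : ∀ t ∈ Ioo (0 : ℝ) 1,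
      ballKernelMeasure μ p {q | t < |f q.1 - f q.2|} * ENNReal.ofReal (t ^ (p + ε - 1)) =
        Ifun μ p t f * ENNReal.ofReal (t ^ (ε - 1)) := fun t ht => by
    rw [Ifun_eq_mul_ballKernelMeasure μ p hf, show p + ε - 1 = p + (ε - 1) by ring,
      Real.rpow_add ht.1, ENNReal.ofReal_mul (Real.rpow_nonneg ht.1.le _)]
    ring
  calc Jfun μ p ε f + ENNReal.ofReal ε * Tfun μ p f
      = ENNReal.ofReal ε * (ENNReal.ofReal (p + ε) *
          ∫⁻ t in Ioo 0 1, Ifun μ p t f * ENNReal.ofReal (t ^ (ε - 1))) := by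
        rw [Jfun_add_Tfun_eq_lintegral μ p hf hε.le, lintegral_ofReal_min_one_rpow _
          (ae_of_all _ fun _ => abs_nonneg _) (measurable_abs_sub_comp hf).aemeasurable hpε,
          setLIntegral_congr_fun measurableSet_Ioo hlayer]
    _ ≤ ENNReal.ofReal ε * (ENNReal.ofReal (p + ε) *
          ∫⁻ t in Ioo 0 1, M * ENNReal.ofReal (t ^ (ε - 1))) := by
        gcongr ENNReal.ofReal ε * (ENNReal.ofReal (p + ε) * ?_)
        exact setLIntegral_mono' measurableSet_Ioo fun t ht =>
          mul_le_mul_left (le_biSup (fun δ => Ifun μ p δ f) ht) _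
    _ = ENNReal.ofReal (p + ε) * M := by
        rw [lintegral_const_mul _ (measurable_id'.pow_const _).ennreal_ofReal,
          lintegral_Ioo_zero_one_ofReal_rpow_sub_one hε]
        have hinv : ENNReal.ofReal ε * ENNReal.ofReal ε⁻¹ = 1 := by
          rw [← ENNReal.ofReal_mul hε.le, mul_inv_cancel₀ hε.ne', ENNReal.ofReal_one]
        calc _ = ENNReal.ofReal (p + ε) * M * (ENNReal.ofReal ε * ENNReal.ofReal ε⁻¹) := by ring
          _ = _ := by rw [hinv, mul_one]

theorem lintegral_lintegral_indicator_congr_ae {X : Type*} [MeasurableSpace X] {μ : Measure X}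
    {f g : X → ℝ} (h : f =ᵐ[μ] g) (P : ℝ → Prop) (Φ : ℝ → X → X → ℝ≥0∞) :
    ∫⁻ x, ∫⁻ y, {y | P (f x - f y)}.indicator (fun y => Φ (f x - f y) x y) y ∂μ ∂μ =
      ∫⁻ x, ∫⁻ y, {y | P (g x - g y)}.indicator (fun y => Φ (g x - g y) x y) y ∂μ ∂μ := by
  classical
  refine lintegral_congr_ae (h.mono fun x hx => lintegral_congr_ae (h.mono fun y hy => ?_))
  rw [indicator_apply, indicator_apply]
  simp only [mem_ofPred_eq, hx, hy]

section CongrAE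

variable {X : Type*} [MetricSpace X] [MeasurableSpace X] {μ : Measure X} {p : ℝ} {f g : X → ℝ}

theorem Ifun_congr_ae (h : f =ᵐ[μ] g) (δ : ℝ) : Ifun μ p δ f = Ifun μ p δ g :=
  lintegral_lintegral_indicator_congr_ae h (fun t => |t| > δ)
    (fun _ x y => ENNReal.ofReal (δ ^ p) /
      (μ (ball x (dist x y)) * ENNReal.ofReal (dist x y ^ p)))

theorem Jfun_congr_ae (h : f =ᵐ[μ] g) (ε : ℝ) : Jfun μ p ε f = Jfun μ p ε g :=
  lintegral_lintegral_indicator_congr_ae h (fun t => |t| ≤ 1)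
    (fun t x y => ENNReal.ofReal (ε * |t| ^ (p + ε)) /
      (μ (ball x (dist x y)) * ENNReal.ofReal (dist x y ^ p)))

theorem Tfun_congr_ae (h : f =ᵐ[μ] g) : Tfun μ p f = Tfun μ p g :=
  lintegral_lintegral_indicator_congr_ae h (fun t => |t| > 1)
    (fun _ x y => 1 / (μ (ball x (dist x y)) * ENNReal.ofReal (dist x y ^ p)))

end CongrAE

theorem Jfun_add_Tfun_le_of_sup_Ifun_lt_top_general {X : Type*} [MetricSpace X]
    [TopologicalSpace.SeparableSpace X] [MeasurableSpace X] [BorelSpace X]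
    (μ : Measure X) (hballs : ∀ (x : X) (r : ℝ), μ (ball x r) < ∞)
    (p : ℝ) (hp : 1 < p)
    (f : X → ℝ) (hf : MemLp f (ENNReal.ofReal p) μ)
    (hM : (⨆ δ ∈ Set.Ioo (0 : ℝ) 1, Ifun μ p δ f) < ∞) :
    (∀ ε ∈ Set.Ioo (0 : ℝ) 1,
        Jfun μ p ε f + ENNReal.ofReal ε * Tfun μ p f ≤
          ENNReal.ofReal (p + ε) * ⨆ δ ∈ Set.Ioo (0 : ℝ) 1, Ifun μ p δ f) ∧
      (⨆ ε ∈ Set.Ioo (0 : ℝ) 1, Jfun μ p ε f) < ∞ ∧ Tfun μ p f < ∞ := by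
  have : SecondCountableTopology X := UniformSpace.secondCountable_of_separable X
  have : IsLocallyFiniteMeasure μ := ⟨fun x => ⟨ball x 1, ball_mem_nhds x one_pos, hballs x 1⟩⟩
  set M := ⨆ δ ∈ Ioo (0 : ℝ) 1, Ifun μ p δ f
  have hfg := hf.aestronglyMeasurable.ae_eq_mk
  have hmain : ∀ ε ∈ Ioo (0 : ℝ) 1,
      Jfun μ p ε f + ENNReal.ofReal ε * Tfun μ p f ≤ ENNReal.ofReal (p + ε) * M := by
    rintro ε ⟨hε, -⟩
    simp_rw [M, Jfun_congr_ae hfg, Tfun_congr_ae hfg, Ifun_congr_ae hfg]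
    exact Jfun_add_Tfun_le_of_measurable μ
      hf.aestronglyMeasurable.stronglyMeasurable_mk.measurable hε (by linarith)
  refine ⟨hmain, ?_, ?_⟩
  · refine (iSup₂_le fun ε hε => ?_).trans_lt
      (ENNReal.mul_lt_top (ENNReal.ofReal_lt_top (r := p + 1)) hM)
    calc Jfun μ p ε f ≤ ENNReal.ofReal (p + ε) * M := le_self_add.trans (hmain ε hε)
      _ ≤ ENNReal.ofReal (p + 1) * M := by gcongr; exact hε.2.le
  · have hhalf := hmain (1 / 2) ⟨by norm_num, by norm_num⟩
    refine ENNReal.lt_top_of_mul_ne_top_right ?_ (ENNReal.ofReal_pos.mpr one_half_pos).ne'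
    exact (le_add_self.trans_lt (hhalf.trans_lt (ENNReal.mul_lt_top ENNReal.ofReal_lt_top hM))).ne

/-- Let `(X,d,m)` be a metric measure space, `p ∈ (1,∞)` and
`f ∈ L^p(m)`. If `M := sup_{δ ∈ (0,1)} I_δ(f) < ∞`, then for every `ε ∈ (0,1)`:
`J_ε(f) + ε T(f) ≤ (p+ε) M`; in particular `sup_{ε ∈ (0,1)} J_ε(f) < ∞` and `T(f) < ∞`. -/
theorem Jfun_add_Tfun_le_of_sup_Ifun_lt_top {X : Type*} [MetricSpace X] [CompleteSpace X]
    [TopologicalSpace.SeparableSpace X] [MeasurableSpace X] [BorelSpace X]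
    (μ : Measure X) (hμ : μ ≠ 0) (hballs : ∀ (x : X) (r : ℝ), μ (ball x r) < ∞)
    (p : ℝ) (hp : 1 < p)
    (f : X → ℝ) (hf : MemLp f (ENNReal.ofReal p) μ)
    (hM : (⨆ δ ∈ Set.Ioo (0 : ℝ) 1, Ifun μ p δ f) < ∞) :
    (∀ ε ∈ Set.Ioo (0 : ℝ) 1,
        Jfun μ p ε f + ENNReal.ofReal ε * Tfun μ p f ≤
          ENNReal.ofReal (p + ε) * ⨆ δ ∈ Set.Ioo (0 : ℝ) 1, Ifun μ p δ f) ∧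
      (⨆ ε ∈ Set.Ioo (0 : ℝ) 1, Jfun μ p ε f) < ∞ ∧ Tfun μ p f < ∞ :=
  Jfun_add_Tfun_le_of_sup_Ifun_lt_top_general μ hballs p hp f hf hM
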